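/- Let k be a field of characteristic zero and χ a bicharacter on ℤ² with values in k \ {0}. Define a sequence of ordered bases E'_i = (f₁^{(i)}, f₂^{(i)}) of ℤ² recursively by E'_0 = (ε₁, ε₂), the standard basis, and, whenever the number m_i := min{m ∈ ℕ₀ | χ(f₁^{(i)},f₁^{(i)})^m χ(f₁^{(i)},f₂^{(i)})χ(f₂^{(i)},f₁^{(i)}) = 1, or χ(f₁^{(i)},f₁^{(i)})^{m+1} = 1 and χ(f₁^{(i)},f₁^{(i)}) ≠ 1} exists, setting T'_i := s_{1,E'_i} (the automorphism of ℤ² with T'_i(f₁^{(i)}) = -f₁^{(i)} and T'_i(f₂^{(i)}) = f₂^{(i)} + m_i f₁^{(i)}) and E'_{i+1} := (f₂^{(i)} + m_i f₁^{(i)}, -f₁^{(i)}). Assume that m_i exists for every i ∈ ℕ₀ and that the set {E'_i | i ∈ ℕ₀} is finite. Then there exists j ≥ 1 with E'_j = E'_0 and E'_{i+j} = E'_i for all i ∈ ℕ₀, and there exists N ≥ 1 such that the composition T'_{N-1} ∘ T'_{N-2} ∘ ⋯ ∘ T'_0 is the identity on ℤ². -/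
import Mathlib

lemma core_aux {G : Type*} [CommGroup G] (q : G) (n : ℕ) (hn : orderOf q = n + 2)
    (c : G) (t C : ℕ) (htc : q ^ t * c = 1)
    (hCle : C ≤ n + 1)
    (hCmem : q ^ C * c = 1 ∨ (q ^ (C + 1) = 1 ∧ q ≠ 1))
    (hCinf : ∀ l, (q ^ l * c = 1 ∨ (q ^ (l + 1) = 1 ∧ q ≠ 1)) → C ≤ l) :
    C = t % (n + 2) := by
  have htmod : q ^ (t % (n + 2)) * c = 1 := by
    rw [← hn, pow_mod_orderOf]; exact htc
  have hle : C ≤ t % (n + 2) := hCinf _ (Or.inl htmod)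
  have hlt : t % (n + 2) < n + 2 := Nat.mod_lt _ (by omega)
  rcases hCmem with h | ⟨h, _⟩
  · have heq : q ^ C = q ^ t := by
      rw [eq_inv_of_mul_eq_one_left h, eq_inv_of_mul_eq_one_left htc]
    have hmod : C ≡ t [MOD orderOf q] := (pow_eq_pow_iff_modEq).mp heq
    rw [hn] at hmod
    have h2 : C % (n + 2) = t % (n + 2) := hmod
    have h3 : C % (n + 2) = C := Nat.mod_eq_of_lt (by omega)
    omega
  · have hdvd : orderOf q ∣ C + 1 := orderOf_dvd_of_pow_eq_one h
    rw [hn] at hdvd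
    have : n + 2 ≤ C + 1 := Nat.le_of_dvd (by omega) hdvd
    omega

lemma core {G : Type*} [CommGroup G] (q r r' : G) (A B : ℕ)
    (hrr' : r * q ^ (2 * A) = r' * q ^ (2 * B))
    (hSne : {l : ℕ | q ^ l * r = 1 ∨ (q ^ (l + 1) = 1 ∧ q ≠ 1)}.Nonempty)
    (hS'ne : {l : ℕ | q ^ l * r' = 1 ∨ (q ^ (l + 1) = 1 ∧ q ≠ 1)}.Nonempty)
    (hA : A = sInf {l : ℕ | q ^ l * r = 1 ∨ (q ^ (l + 1) = 1 ∧ q ≠ 1)})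
    (hB : B = sInf {l : ℕ | q ^ l * r' = 1 ∨ (q ^ (l + 1) = 1 ∧ q ≠ 1)}) :
    A = B := by
  have hAmem : q ^ A * r = 1 ∨ (q ^ (A + 1) = 1 ∧ q ≠ 1) := hA ▸ Nat.sInf_mem hSne
  have hBmem : q ^ B * r' = 1 ∨ (q ^ (B + 1) = 1 ∧ q ≠ 1) := hB ▸ Nat.sInf_mem hS'ne
  have hAinf : ∀ l, (q ^ l * r = 1 ∨ (q ^ (l + 1) = 1 ∧ q ≠ 1)) → A ≤ l := by
    intro l hl; rw [hA]; exact Nat.sInf_le hl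
  have hBinf : ∀ l, (q ^ l * r' = 1 ∨ (q ^ (l + 1) = 1 ∧ q ≠ 1)) → B ≤ l := by
    intro l hl; rw [hB]; exact Nat.sInf_le hl
  rcases hcase : orderOf q with _ | _ | n
  · -- infinite order
    have hno : ∀ l : ℕ, ¬ (q ^ (l + 1) = 1 ∧ q ≠ 1) := by
      rintro l ⟨h1, -⟩
      have := orderOf_dvd_of_pow_eq_one h1
      rw [hcase] at this
      omega
    have hA1 : q ^ A * r = 1 := hAmem.resolve_right (hno A)
    have hB1 : q ^ B * r' = 1 := hBmem.resolve_right (hno B)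
    have e1 : r * q ^ (2 * A) = q ^ A := by
      rw [two_mul, pow_add, ← mul_assoc, mul_comm r, hA1, one_mul]
    have e2 : r' * q ^ (2 * B) = q ^ B := by
      rw [two_mul, pow_add, ← mul_assoc, mul_comm r', hB1, one_mul]
    have heq : q ^ A = q ^ B := by rw [← e1, ← e2, hrr']
    have hmod : A ≡ B [MOD orderOf q] := (pow_eq_pow_iff_modEq).mp heq
    rw [hcase] at hmod
    simpa [Nat.ModEq] using hmod
  · -- orderOf q = 1, i.e. q = 1
    have hq1 : q = 1 := orderOf_eq_one_iff.mp hcase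
    subst hq1
    simp only [one_pow, one_mul, ne_eq, not_true_eq_false, and_false, or_false] at hAmem hBmem
    have hr' : r' = 1 := by
      have h := hrr'; simp only [one_pow, mul_one] at h; rw [← h, hAmem]
    have h0 : A ≤ 0 := hAinf 0 (by simp [hAmem])
    have h0' : B ≤ 0 := hBinf 0 (by simp [hr'])
    omega
  · -- orderOf q = n + 2
    have hcase2 : orderOf q = n + 2 := by omega
    have hne1 : q ≠ 1 := by
      intro h; rw [h, orderOf_one] at hcase; omega
    have hq : q ^ (n + 2) = 1 := by rw [← hcase2]; exact pow_orderOf_eq_one q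
    have hq2 : q ^ (2 * (n + 2)) = 1 := by
      rw [show 2 * (n+2) = (n+2) * 2 by ring, pow_mul, hq, one_pow]
    have hAle : A ≤ n + 1 := hAinf _ (Or.inr ⟨by rw [show n+1+1 = n+2 by omega]; exact hq, hne1⟩)
    have hBle : B ≤ n + 1 := hBinf _ (Or.inr ⟨by rw [show n+1+1 = n+2 by omega]; exact hq, hne1⟩)
    by_cases hs : ∃ s : ℕ, q ^ s * r = 1
    · obtain ⟨s, hsr⟩ := hs
      have hAeq : A = s % (n + 2) := core_aux q n hcase2 r s A hsr hAle hAmem hAinf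
      set t' := s + 2 * B + 2 * ((n + 2) - A) with ht'
      have ht'c : q ^ t' * r' = 1 := by
        have hsplit : t' = (s + (2*(n+2) - 2*A)) + 2 * B := by omega
        have hsplit2 : 2*(n+2) = 2*A + (2*(n+2) - 2*A) := by omega
        have e : q ^ t' * r' = (q ^ s * r) * q ^ (2*(n+2)) := by
          rw [hsplit, pow_add, pow_add, mul_assoc, mul_comm (q ^ (2*B)) r', ← hrr',
            show q ^ (2*(n+2)) = q ^ (2*A) * q ^ (2*(n+2)-2*A) from by
              rw [← pow_add]; congr 1]
          ac_rfl
        rw [e, hsr, one_mul, hq2]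
      have hBeq : B = t' % (n + 2) := core_aux q n hcase2 r' t' B ht'c hBle hBmem hBinf
      have h1 : B ≡ t' [MOD n+2] := by rw [hBeq]; exact (Nat.mod_modEq t' (n+2))
      have h2 : A ≡ s [MOD n+2] := by rw [hAeq]; exact (Nat.mod_modEq s (n+2))
      have h3 : B + 2*A ≡ s + 2*B [MOD n+2] := by
        calc B + 2*A ≡ t' + 2*A [MOD n+2] := h1.add_right _
          _ = (s + 2*B) + 2*(n+2) := by omega
          _ ≡ (s + 2*B) + 0 [MOD n+2] :=
              (Nat.ModEq.refl _).add ((Nat.modEq_zero_iff_dvd).mpr ⟨2, by ring⟩)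
          _ = s + 2*B := by omega
      have h4 : 2*A + B ≡ (s + B) + B [MOD n+2] := by
        calc 2*A + B = B + 2*A := by omega
          _ ≡ s + 2*B [MOD n+2] := h3
          _ = (s + B) + B := by omega
      have h5 : 2*A ≡ s + B [MOD n+2] := Nat.ModEq.add_right_cancel' B h4
      have h6 : s + A ≡ s + B [MOD n+2] := by
        calc s + A ≡ A + A [MOD n+2] := h2.symm.add_right A
          _ = 2*A := by omega
          _ ≡ s + B [MOD n+2] := h5
      have h7 : A ≡ B [MOD n+2] := Nat.ModEq.add_left_cancel' s h6
      have h8 : A % (n+2) = B % (n+2) := h7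
      have h9 : A % (n+2) = A := Nat.mod_eq_of_lt (by omega)
      have h10 : B % (n+2) = B := Nat.mod_eq_of_lt (by omega)
      omega
    · have hs' : ¬∃ t : ℕ, q ^ t * r' = 1 := by
        rintro ⟨t, ht⟩
        apply hs
        refine ⟨t + 2 * A + 2 * ((n + 2) - B), ?_⟩
        have hsplit : t + 2*A + 2*((n+2) - B) = (t + (2*(n+2) - 2*B)) + 2*A := by omega
        have hsplit2 : 2*(n+2) = 2*B + (2*(n+2) - 2*B) := by omega
        have e : q ^ (t + 2*A + 2*((n+2)-B)) * r = (q ^ t * r') * q ^ (2*(n+2)) := by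
          rw [hsplit, pow_add, pow_add, mul_assoc, mul_comm (q ^ (2*A)) r, hrr',
            show q ^ (2*(n+2)) = q ^ (2*B) * q ^ (2*(n+2)-2*B) from by
              rw [← pow_add]; congr 1]
          ac_rfl
        rw [e, ht, one_mul, hq2]
      have hA2 : q ^ (A+1) = 1 := ((hAmem.resolve_left (fun h => hs ⟨A, h⟩))).1
      have hB2 : q ^ (B+1) = 1 := ((hBmem.resolve_left (fun h => hs' ⟨B, h⟩))).1
      have d1 : n + 2 ∣ A + 1 := hcase2 ▸ orderOf_dvd_of_pow_eq_one hA2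
      have d2 : n + 2 ∣ B + 1 := hcase2 ▸ orderOf_dvd_of_pow_eq_one hB2
      have := Nat.le_of_dvd (by omega) d1
      have := Nat.le_of_dvd (by omega) d2
      omega



/-- The defining condition for the number `m_i`: either
`χ(x,x)^m χ(x,y) χ(y,x) = 1`, or `χ(x,x)^{m+1} = 1` and `χ(x,x) ≠ 1`. -/
def ReflCond {k : Type*} [Field k]
    (χ : (Fin 2 → ℤ) → (Fin 2 → ℤ) → kˣ) (x y : Fin 2 → ℤ) (m : ℕ) : Prop :=
  χ x x ^ m * (χ x y * χ y x) = 1 ∨ (χ x x ^ (m + 1) = 1 ∧ χ x x ≠ 1)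

/-- Let `χ` be a bicharacter on `ℤ²` with values in `k \ {0}`.  Consider the sequence
of ordered bases `E'_0 = (ε₁, ε₂)` (standard basis) and
`E'_{i+1} = (f₂^{(i)} + m_i f₁^{(i)}, -f₁^{(i)})` where `E'_i = (f₁^{(i)}, f₂^{(i)})`
and `m_i` is the minimum of `ReflCond`, together with the automorphisms
`T'_i = s_{1,E'_i}`.  If all `m_i` exist and `{E'_i | i ∈ ℕ}` is finite, then the
sequence is periodic with some period `j ≥ 1` starting at `E'_0`, and some composition
`T'_{N-1} ∘ ⋯ ∘ T'_0` with `N ≥ 1` is the identity. -/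
theorem weyl_groupoid_rank_two_periodic {k : Type*} [Field k]
    (χ : (Fin 2 → ℤ) → (Fin 2 → ℤ) → kˣ)
    (hχ0l : ∀ e, χ 0 e = 1) (hχ0r : ∀ e, χ e 0 = 1)
    (hχl : ∀ x y z, χ (x + y) z = χ x z * χ y z)
    (hχr : ∀ x y z, χ x (y + z) = χ x y * χ x z)
    (E : ℕ → (Fin 2 → ℤ) × (Fin 2 → ℤ))
    (hE0 : E 0 = (![1, 0], ![0, 1]))
    (m : ℕ → ℕ)
    (hex : ∀ i, {l : ℕ | ReflCond χ (E i).1 (E i).2 l}.Nonempty)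
    (hm : ∀ i, m i = sInf {l : ℕ | ReflCond χ (E i).1 (E i).2 l})
    (hrec : ∀ i, E (i + 1) = ((E i).2 + (m i : ℤ) • (E i).1, -(E i).1))
    (T : ℕ → Module.End ℤ (Fin 2 → ℤ))
    (hT1 : ∀ i, T i (E i).1 = -(E i).1)
    (hT2 : ∀ i, T i (E i).2 = (E i).2 + (m i : ℤ) • (E i).1)
    (hfin : (Set.range E).Finite) :
    (∃ j : ℕ, 1 ≤ j ∧ E j = E 0 ∧ ∀ i, E (i + j) = E i) ∧
    (∃ N : ℕ, 1 ≤ N ∧ ((List.range N).reverse.map T).prod = 1) := by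
  -- powers of the bicharacter
  have hzpowr : ∀ (u v : Fin 2 → ℤ) (c : ℕ), χ u ((c : ℤ) • v) = χ u v ^ c := by
    intro u v c
    induction c with
    | zero => simpa using hχ0r u
    | succ d ih =>
        rw [show ((d + 1 : ℕ) : ℤ) = (d : ℤ) + 1 by push_cast; ring, add_smul, one_smul,
          hχr, ih, pow_succ]
  have hzpowl : ∀ (u v : Fin 2 → ℤ) (c : ℕ), χ ((c : ℤ) • v) u = χ v u ^ c := by
    intro u v c
    induction c with
    | zero => simpa using hχ0l u
    | succ d ih =>
        rw [show ((d + 1 : ℕ) : ℤ) = (d : ℤ) + 1 by push_cast; ring, add_smul, one_smul,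
          hχl, ih, pow_succ]
  have hshift : ∀ (x y : Fin 2 → ℤ) (c : ℕ),
      χ x (y + (c : ℤ) • x) * χ (y + (c : ℤ) • x) x
        = (χ x y * χ y x) * (χ x x) ^ (2 * c) := by
    intro x y c
    rw [hχr, hχl, hzpowr, hzpowl, two_mul, pow_add]
    ac_rfl
  -- injectivity of the step
  have step_inj : ∀ a b : ℕ, E (a + 1) = E (b + 1) → E a = E b := by
    intro a b hab
    rw [hrec a, hrec b] at hab
    have h2 : -(E a).1 = -(E b).1 := congrArg Prod.snd hab
    have hx : (E a).1 = (E b).1 := neg_injective h2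
    have h1 : (E a).2 + (m a : ℤ) • (E a).1 = (E b).2 + (m b : ℤ) • (E b).1 :=
      congrArg Prod.fst hab
    rw [← hx] at h1
    have hrr' : (χ (E a).1 (E a).2 * χ (E a).2 (E a).1) * (χ (E a).1 (E a).1) ^ (2 * m a)
        = (χ (E a).1 (E b).2 * χ (E b).2 (E a).1) * (χ (E a).1 (E a).1) ^ (2 * m b) := by
      rw [← hshift (E a).1 (E a).2 (m a), ← hshift (E a).1 (E b).2 (m b), h1]
    have hmab : m a = m b := by
      refine core (χ (E a).1 (E a).1) (χ (E a).1 (E a).2 * χ (E a).2 (E a).1)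
        (χ (E a).1 (E b).2 * χ (E b).2 (E a).1) (m a) (m b) hrr' ?_ ?_ ?_ ?_
      · exact hex a
      · have := hex b; rw [← hx] at this; exact this
      · exact hm a
      · have := hm b; rw [← hx] at this; exact this
    have hy : (E a).2 = (E b).2 := by
      rw [hmab] at h1; exact add_right_cancel h1
    exact Prod.ext hx hy
  -- find a repetition
  have hninj : ¬ Function.Injective E := by
    intro h; exact (Set.infinite_range_of_injective h) hfin
  have hrep : ∃ a b : ℕ, a < b ∧ E a = E b := by
    simp only [Function.Injective, not_forall] at hninj
    obtain ⟨a, b, hab, hne⟩ := hninj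
    rcases Nat.lt_or_ge a b with h | h
    · exact ⟨a, b, h, hab⟩
    · exact ⟨b, a, by omega, hab.symm⟩
  obtain ⟨a, b, hab, heq⟩ := hrep
  set j := b - a with hj
  have hj1 : 1 ≤ j := by omega
  -- propagate backwards to 0
  have hback : ∀ i, E i = E (i + j) → E 0 = E j := by
    intro i
    induction i with
    | zero => intro h; simpa using h
    | succ d ih =>
        intro h
        apply ih
        apply step_inj d (d + j)
        rw [show d + j + 1 = d + 1 + j by omega]
        exact h
  have hE0j : E 0 = E j := hback a (by rw [show a + j = b by omega]; exact heq)
  -- forward periodicity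
  have hper : ∀ i, E (i + j) = E i := by
    intro i
    induction i with
    | zero => simpa using hE0j.symm
    | succ d ih =>
        have hm' : m (d + j) = m d := by rw [hm, hm, ih]
        rw [show d + 1 + j = (d + j) + 1 by omega, hrec, hrec, ih, hm']
  refine ⟨⟨j, hj1, hE0j.symm, hper⟩, ?_⟩
  -- part 2
  have hPsucc : ∀ (i : ℕ) (v : Fin 2 → ℤ),
      (((List.range (i + 1)).reverse.map T).prod) v
        = T i ((((List.range i).reverse.map T).prod) v) := by
    intro i v
    rw [List.range_succ, List.reverse_append]
    simp [Module.End.mul_apply]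
  have hP : ∀ i, (((List.range i).reverse.map T).prod) (E 0).1
        = (if Even i then (E i).1 else (E i).2)
      ∧ (((List.range i).reverse.map T).prod) (E 0).2
        = (if Even i then (E i).2 else (E i).1) := by
    intro i
    induction i with
    | zero => simp
    | succ d ih =>
        obtain ⟨ih1, ih2⟩ := ih
        have hnext1 : (E (d + 1)).1 = (E d).2 + (m d : ℤ) • (E d).1 := by rw [hrec]
        have hnext2 : (E (d + 1)).2 = -(E d).1 := by rw [hrec]
        by_cases hd : Even d
        · have hd1 : ¬ Even (d + 1) := by simp [Nat.even_add_one, hd]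
          rw [hPsucc, hPsucc, ih1, ih2, if_pos hd, if_pos hd, if_neg hd1, if_neg hd1,
            hT1, hT2, hnext1, hnext2]
          exact ⟨rfl, rfl⟩
        · have hd1 : Even (d + 1) := by simp [Nat.even_add_one, hd]
          rw [hPsucc, hPsucc, ih1, ih2, if_neg hd, if_neg hd, if_pos hd1, if_pos hd1,
            hT1, hT2, hnext1, hnext2]
          exact ⟨rfl, rfl⟩
  refine ⟨2 * j, by omega, ?_⟩
  have hE2j : E (2 * j) = E 0 := by
    rw [show 2 * j = j + j by ring, hper j, ← hE0j]
  have heven : Even (2 * j) := ⟨j, two_mul j⟩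
  obtain ⟨hP1, hP2⟩ := hP (2 * j)
  rw [if_pos heven, hE2j] at hP1 hP2
  rw [hE0] at hP1 hP2
  simp only at hP1 hP2
  apply LinearMap.ext
  intro v
  have hv : v = v 0 • ![(1 : ℤ), 0] + v 1 • ![(0 : ℤ), 1] := by
    funext i
    fin_cases i <;> simp
  rw [Module.End.one_apply]
  conv_lhs => rw [hv]
  rw [map_add, map_smul, map_smul, hP1, hP2, ← hv]
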